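/- Let (X_i)_{i≥0} be a stationary sequence with common distribution function G, let (u_n) satisfy n(1 - G(u_n)) → τ, and suppose there are C > 0, 0 < ς < 1 with |P(X_0 > u_n and X_j > u_n) - (1 - G(u_n))²| ≤ C ς^j for all j, n. With T(n) = (4/log ς⁻¹) log n, we have lim_{k→∞} limsup_{n→∞} n ∑_{j=⌈T(n)⌉+1}^{⌊n/k⌋} P(X_0 > u_n and X_j > u_n) = 0. -/

import Mathlib

/-!
Past the decorrelation time `T(n)` the mixing bound gives `ς ^ j ≤ n⁻⁴`, so every joint
exceedance probability is at most `(1 - G(u_n))² + C n⁻⁴`. There are at most `n / k` such `j`,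
hence the `n`-th term is at most `((n (1 - G(u_n)))² + C n⁻²) / k`, whose limit is `τ² / k`.
-/

open Filter Topology MeasureTheory

theorem Real.rpow_div_log_inv_mul_log {ς x : ℝ} (hς0 : 0 < ς) (hς1 : ς ≠ 1) (hx : 0 < x) (m : ℕ) :
    ς ^ (m / Real.log ς⁻¹ * Real.log x) = (x ^ m)⁻¹ := by
  have hlog : Real.log ς ≠ 0 := Real.log_ne_zero_of_pos_of_ne_one hς0 hς1
  rw [Real.rpow_def_of_pos hς0, Real.log_inv, ← Real.rpow_natCast, ← Real.rpow_neg hx.le,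
    Real.rpow_def_of_pos hx]
  congr 1
  field_simp

theorem pow_le_inv_pow_of_div_log_inv_mul_log_le {ς x : ℝ} (hς0 : 0 < ς) (hς1 : ς < 1)
    (hx : 0 < x) {m j : ℕ} (hj : m / Real.log ς⁻¹ * Real.log x ≤ j) :
    ς ^ j ≤ (x ^ m)⁻¹ := by
  rw [← Real.rpow_natCast, ← Real.rpow_div_log_inv_mul_log hς0 hς1.ne hx]
  exact Real.rpow_le_rpow_of_exponent_ge hς0 hς1.le hj

theorem natCast_mul_sum_Icc_div_le {f : ℕ → ℝ} {m n k : ℕ} {b : ℝ} (hb : 0 ≤ b)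
    (hf : ∀ j ∈ Finset.Icc (m + 1) (n / k), f j ≤ b) :
    (n : ℝ) * ∑ j ∈ Finset.Icc (m + 1) (n / k), f j ≤ (n : ℝ) ^ 2 / k * b := by
  have hcard : ((Finset.Icc (m + 1) (n / k)).card : ℝ) ≤ n / k := by
    rw [Nat.card_Icc, Nat.succ_sub_succ]
    exact (Nat.cast_le.mpr (Nat.sub_le _ _)).trans Nat.cast_div_le
  calc (n : ℝ) * ∑ j ∈ Finset.Icc (m + 1) (n / k), f j
      ≤ n * ((Finset.Icc (m + 1) (n / k)).card * b) := by
        gcongr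
        simpa using Finset.sum_le_card_nsmul _ _ _ hf
    _ ≤ n * (n / k * b) := by gcongr
    _ = (n : ℝ) ^ 2 / k * b := by ring

theorem tendsto_limsup_zero_of_le_div {F : ℕ → ℕ → ℝ} {a : ℕ → ℝ} {L : ℝ}
    (ha : Tendsto a atTop (𝓝 L)) (hF0 : ∀ k n, 0 ≤ F k n)
    (hF : ∀ k, 0 < k → ∀ᶠ n in atTop, F k n ≤ a n / k) :
    Tendsto (fun k => limsup (F k) atTop) atTop (𝓝 0) := by
  have hak : ∀ k : ℕ, Tendsto (fun n => a n / k) atTop (𝓝 (L / k)) := fun k => ha.div_const k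
  have hupper : ∀ k, 0 < k → limsup (F k) atTop ≤ L / k := fun k hk => by
    rw [← (hak k).limsup_eq]
    exact limsup_le_limsup (hF k hk) (isCoboundedUnder_le_of_le atTop (hF0 k))
      (hak k).isBoundedUnder_le
  have hlower : ∀ k, 0 < k → 0 ≤ limsup (F k) atTop := fun k hk =>
    le_limsup_of_frequently_le (Frequently.of_forall (hF0 k))
      ((hak k).isBoundedUnder_le.mono_le (hF k hk))
  refine tendsto_of_tendsto_of_tendsto_of_le_of_le' tendsto_const_nhds
    (tendsto_const_div_atTop_nhds_zero_nat L) ?_ ?_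
  · filter_upwards [eventually_gt_atTop 0] with k hk using hlower k hk
  · filter_upwards [eventually_gt_atTop 0] with k hk using hupper k hk

theorem Dprime_step_two_general
    {Ω : Type*} [MeasurableSpace Ω] (P : Measure Ω)
    (X : ℕ → Ω → ℝ)
    (G : ℝ → ℝ) (u : ℕ → ℝ) (τ : ℝ)
    (hlevels : Tendsto (fun n : ℕ => (n : ℝ) * (1 - G (u n))) atTop (𝓝 τ))
    (C ς : ℝ) (hC : 0 < C) (hς : ς ∈ Set.Ioo (0 : ℝ) 1)
    (hcov : ∀ j n : ℕ,
      |(P {ω | u n < X 0 ω ∧ u n < X j ω}).toReal - (1 - G (u n)) ^ 2|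
        ≤ C * ς ^ j)
    (T : ℕ → ℝ) (hT : ∀ n : ℕ, T n = 4 / Real.log ς⁻¹ * Real.log n) :
    Tendsto (fun k : ℕ =>
      limsup (fun n : ℕ => (n : ℝ) *
        ∑ j ∈ Finset.Icc (⌈T n⌉₊ + 1) (n / k),
          (P {ω | u n < X 0 ω ∧ u n < X j ω}).toReal) atTop)
      atTop (𝓝 0) := by
  obtain ⟨hς0, hς1⟩ := hς
  have hbound : Tendsto (fun n : ℕ => ((n : ℝ) * (1 - G (u n))) ^ 2 + C / (n : ℝ) ^ 2)
      atTop (𝓝 (τ ^ 2)) := by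
    have hvanish : Tendsto (fun n : ℕ => C / (n : ℝ) ^ 2) atTop (𝓝 0) :=
      tendsto_const_nhds.div_atTop
        ((tendsto_pow_atTop two_ne_zero).comp tendsto_natCast_atTop_atTop)
    simpa using (hlevels.pow 2).add hvanish
  refine tendsto_limsup_zero_of_le_div hbound
    (fun k n => mul_nonneg n.cast_nonneg (Finset.sum_nonneg fun j _ => ENNReal.toReal_nonneg))
    fun k hk => ?_
  filter_upwards [eventually_gt_atTop 0] with n hn
  have hn' : (0 : ℝ) < n := Nat.cast_pos.mpr hn
  have hterm : ∀ j ∈ Finset.Icc (⌈T n⌉₊ + 1) (n / k),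
      (P {ω | u n < X 0 ω ∧ u n < X j ω}).toReal ≤ (1 - G (u n)) ^ 2 + C * ((n : ℝ) ^ 4)⁻¹ := by
    intro j hj
    obtain ⟨hj_gt, -⟩ := Finset.mem_Icc.mp hj
    have hTj : ((4 : ℕ) : ℝ) / Real.log ς⁻¹ * Real.log n ≤ j := by
      rw [Nat.cast_ofNat, ← hT]
      exact (Nat.le_ceil _).trans (mod_cast (by omega : ⌈T n⌉₊ ≤ j))
    have hdecay := pow_le_inv_pow_of_div_log_inv_mul_log_le hς0 hς1 hn' hTj
    linarith [(abs_le.mp (hcov j n)).2, mul_le_mul_of_nonneg_left hdecay hC.le]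
  calc _ ≤ (n : ℝ) ^ 2 / k * ((1 - G (u n)) ^ 2 + C * ((n : ℝ) ^ 4)⁻¹) :=
        natCast_mul_sum_Icc_div_le (by positivity) hterm
    _ = (((n : ℝ) * (1 - G (u n))) ^ 2 + C / (n : ℝ) ^ 2) / k := by field_simp

/-- Step (2) in the verification of `D'(u_n)`: beyond the decorrelation time
`T(n)`, the joint exceedance probabilities are controlled by decay of
correlations, and the corresponding part of the `D'(u_n)` sum vanishes. -/
theorem Dprime_step_two
    {Ω : Type*} [MeasurableSpace Ω] (P : Measure Ω) [IsProbabilityMeasure P]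
    (X : ℕ → Ω → ℝ) (hmeas : ∀ i, Measurable (X i))
    (G : ℝ → ℝ) (u : ℕ → ℝ) (τ : ℝ)
    (hlevels : Tendsto (fun n : ℕ => (n : ℝ) * (1 - G (u n))) atTop (𝓝 τ))
    (C ς : ℝ) (hC : 0 < C) (hς : ς ∈ Set.Ioo (0 : ℝ) 1)
    (hcov : ∀ j n : ℕ,
      |(P {ω | u n < X 0 ω ∧ u n < X j ω}).toReal - (1 - G (u n)) ^ 2|
        ≤ C * ς ^ j)
    (T : ℕ → ℝ) (hT : ∀ n : ℕ, T n = 4 / Real.log ς⁻¹ * Real.log n) :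
    Tendsto (fun k : ℕ =>
      limsup (fun n : ℕ => (n : ℝ) *
        ∑ j ∈ Finset.Icc (⌈T n⌉₊ + 1) (n / k),
          (P {ω | u n < X 0 ω ∧ u n < X j ω}).toReal) atTop)
      atTop (𝓝 0) :=
  Dprime_step_two_general P X G u τ hlevels C ς hC hς hcov T hT
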